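/- Assume BC = 0 and BD = 0. Let T = [[A, B], [D^π·C, D^π·D]]. Then the Drazin inverse of T is T^d = [[A^d, (A^d)^2·B], [0, 0]] + Σ_{j=1}^{n'−1} [[0, 0], [D^π·D^{j−1}·C·(A^d)^{j+1}, D^π·D^{j−1}·C·(A^d)^{j+2}·B]] for any positive integer n' with D^π·D^{n'−1} = 0 (i.e., n' > ind(D)), and for any positive integer g with g ≥ ind(T), the Drazin inverse of M is M^d = [[0, 0], [−D^d·C·A^d, D^d − D^d·C·(A^d)^2·B]] + T^d + Σ_{k=0}^{g−1} [[0, 0], [(D^d)^{k+2}·C, 0]]·T^k·(I − T·T^d). -/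
import Mathlib
open Finset

section DrazinRing
variable {R : Type*} [Ring R]

private lemma mz {a b : R} (h : a * b = 0) (x : R) : a * (b * x) = 0 := by
  rw [← mul_assoc, h, zero_mul]

private lemma mr {a b c : R} (h : a * b = c) (x : R) : a * (b * x) = c * x := by
  rw [← mul_assoc, h]

private lemma mpi {a w : R} (h : a * w = 0) (x : R) : a * ((1 - w) * x) = a * x := by
  rw [← mul_assoc, mul_sub, mul_one, h, sub_zero]

lemma drazin_pow_ext (T X : R) (k : ℕ) (hk : T ^ (k + 1) * X = T ^ k) :
    ∀ j, T ^ (k + j + 1) * X = T ^ (k + j) := by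
  intro j
  induction j with
  | zero => simpa using hk
  | succ j ih =>
      have h1 : T ^ (k + (j+1) + 1) = T * T ^ (k + j + 1) := by
        rw [← pow_succ']; ring_nf
      rw [h1, mul_assoc, ih, ← pow_succ']
      ring_nf

lemma drazin_unique (T X Y : R)
    (hc : T * X = X * T) (hi : X * T * X = X) (hk : ∃ k, T ^ (k + 1) * X = T ^ k)
    (hc' : T * Y = Y * T) (hi' : Y * T * Y = Y) (hk' : ∃ k, T ^ (k + 1) * Y = T ^ k) :
    X = Y := by
  obtain ⟨k1, hk1⟩ := hk
  obtain ⟨k2, hk2⟩ := hk'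
  set k := k1 + k2 with hkdef
  have hX : T ^ (k + 1) * X = T ^ k := by
    have := drazin_pow_ext T X k1 hk1 k2; simpa using this
  have hY : T ^ (k + 1) * Y = T ^ k := by
    have := drazin_pow_ext T Y k2 hk2 k1
    rw [show k2 + k1 = k by omega] at this; exact this
  -- X = X^(p+1) * T^p
  have hXp : ∀ p, X ^ (p + 1) * T ^ p = X := by
    intro p
    induction p with
    | zero => simp
    | succ p ih =>
        have : X ^ (p + 2) * T ^ (p + 1) = (X * (X ^ (p+1) * T ^ p)) * T := by
          rw [pow_succ' X, pow_succ T]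
          noncomm_ring
        rw [this, ih]
        calc (X * X) * T = X * (X * T) := by rw [mul_assoc]
          _ = X * (T * X) := by rw [hc]
          _ = X * T * X := by rw [mul_assoc]
          _ = X := hi
  have hYp : ∀ p, T ^ p * Y ^ (p + 1) = Y := by
    intro p
    induction p with
    | zero => simp
    | succ p ih =>
        have : T ^ (p + 1) * Y ^ (p + 2) = T * ((T ^ p * Y ^ (p+1)) * Y) := by
          rw [pow_succ Y, pow_succ' T, mul_assoc, mul_assoc]
        rw [this, ih]
        calc T * (Y * Y) = (T * Y) * Y := by rw [mul_assoc]
          _ = (Y * T) * Y := by rw [hc']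
          _ = Y := hi'
  have cXT : Commute X T := hc.symm
  have idemXT : ∀ p, (X * T) ^ (p + 1) = X * T := by
    intro p
    induction p with
    | zero => simp
    | succ p ih =>
        rw [pow_succ, ih]
        calc X * T * (X * T) = (X * T * X) * T := by noncomm_ring
          _ = X * T := by rw [hi]
  have idemTY : ∀ p, (T * Y) ^ (p + 1) = T * Y := by
    intro p
    induction p with
    | zero => simp
    | succ p ih =>
        rw [pow_succ, ih]
        calc T * Y * (T * Y) = T * (Y * T * Y) := by noncomm_ring
          _ = T * Y := by rw [hi']
  have e1 : X = X * T * Y := by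
    calc X = X ^ (k + 1) * T ^ k := (hXp k).symm
      _ = X ^ (k + 1) * (T ^ (k + 1) * Y) := by rw [hY]
      _ = (X ^ (k + 1) * T ^ (k + 1)) * Y := by rw [mul_assoc]
      _ = (X * T) ^ (k + 1) * Y := by rw [cXT.mul_pow]
      _ = X * T * Y := by rw [idemXT]
  have e2 : Y = X * T * Y := by
    calc Y = T ^ k * Y ^ (k + 1) := (hYp k).symm
      _ = (T ^ (k + 1) * X) * Y ^ (k + 1) := by rw [hX]
      _ = (X * T ^ (k + 1)) * Y ^ (k + 1) := by rw [(cXT.pow_right (k+1)).eq]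
      _ = X * (T ^ (k + 1) * Y ^ (k + 1)) := by rw [mul_assoc]
      _ = X * (T * Y) ^ (k + 1) := by rw [(show Commute T Y from hc').mul_pow]
      _ = X * (T * Y) := by rw [idemTY]
      _ = X * T * Y := by rw [mul_assoc]
  rw [e1, ← e2]


lemma drazin_add (P Pd Q Qd Z : R) (g h : ℕ) (hg : 1 ≤ g) (hh : 1 ≤ h)
    (hPQ : P * Q = 0) (hPQd : P * Qd = 0)
    (hP1 : P * Pd = Pd * P) (hP2 : Pd * P * Pd = Pd) (hP3 : P ^ g * (1 - P * Pd) = 0)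
    (hQ1 : Q * Qd = Qd * Q) (hQ2 : Qd * Q * Qd = Qd) (hQ3 : Q ^ h * (1 - Q * Qd) = 0)
    (hZ : Z = (∑ n ∈ range h, (1 - Q * Qd) * Q ^ n * Pd ^ (n + 1)) +
        ∑ m ∈ range g, Qd ^ (m + 1) * P ^ m * (1 - P * Pd)) :
    (P + Q) * Z = Z * (P + Q) ∧ Z * ((P + Q) * Z) = Z ∧
      (P + Q) ^ (g + h + 1) * Z = (P + Q) ^ (g + h) := by
  obtain ⟨g', rfl⟩ : ∃ g', g = g' + 1 := ⟨g - 1, by omega⟩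
  obtain ⟨h', rfl⟩ : ∃ h', h = h' + 1 := ⟨h - 1, by omega⟩
  set S1 : R := ∑ n ∈ range (h' + 1), (1 - Q * Qd) * Q ^ n * Pd ^ (n + 1) with hS1def
  set S2 : R := ∑ m ∈ range (g' + 1), Qd ^ (m + 1) * P ^ m * (1 - P * Pd) with hS2def
  -- basic facts
  have fPdd : P * Pd * Pd = Pd := by rw [hP1]; exact hP2
  have fQdd : Q * Qd * Qd = Qd := by rw [hQ1]; exact hQ2
  have fPddP : Pd * Pd * P = Pd := by rw [mul_assoc, ← hP1, ← mul_assoc, hP2]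
  have fQddQ : Qd * Qd * Q = Qd := by rw [mul_assoc, ← hQ1, ← mul_assoc, hQ2]
  have fPdQ : Pd * Q = 0 := by rw [← fPddP, mul_assoc, hPQ, mul_zero]
  have fPdQd : Pd * Qd = 0 := by rw [← fPddP, mul_assoc, hPQd, mul_zero]
  have fPpQ : ∀ k : ℕ, P ^ (k + 1) * Q = 0 := fun k => by
    rw [pow_succ, mul_assoc, hPQ, mul_zero]
  have fPpQd : ∀ k : ℕ, P ^ (k + 1) * Qd = 0 := fun k => by
    rw [pow_succ, mul_assoc, hPQd, mul_zero]
  have fPdpQ : ∀ k : ℕ, Pd ^ (k + 1) * Q = 0 := fun k => by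
    rw [pow_succ, mul_assoc, fPdQ, mul_zero]
  have fPdpQd : ∀ k : ℕ, Pd ^ (k + 1) * Qd = 0 := fun k => by
    rw [pow_succ, mul_assoc, fPdQd, mul_zero]
  have fPdpQp : ∀ k j : ℕ, Pd ^ (k + 1) * Q ^ (j + 1) = 0 := fun k j => by
    rw [pow_succ' Q, ← mul_assoc, fPdpQ, zero_mul]
  have cPpi : Commute P (1 - P * Pd) :=
    (Commute.one_right P).sub_right ((Commute.refl P).mul_right hP1)
  have cQpi : Commute Q (1 - Q * Qd) :=
    (Commute.one_right Q).sub_right ((Commute.refl Q).mul_right hQ1)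
  have fPpipow : ∀ k : ℕ, P ^ (g' + 1 + k) * (1 - P * Pd) = 0 := by
    intro k
    rw [pow_add, mul_assoc, (cPpi.pow_left k).eq, ← mul_assoc, hP3, zero_mul]
  have fQpipow : ∀ k : ℕ, Q ^ (h' + 1 + k) * (1 - Q * Qd) = 0 := by
    intro k
    rw [pow_add, mul_assoc, (cQpi.pow_left k).eq, ← mul_assoc, hQ3, zero_mul]
  have fQQdpow : ∀ k : ℕ, Q ^ (k + 1) * Qd ^ (k + 1) = Q * Qd := by
    intro k
    induction k with
    | zero => simp
    | succ k ih =>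
        calc Q ^ (k + 2) * Qd ^ (k + 2) = Q * (Q ^ (k + 1) * Qd ^ (k + 1)) * Qd := by
              rw [pow_succ' Q, pow_succ Qd]; noncomm_ring
          _ = Q * (Q * Qd) * Qd := by rw [ih]
          _ = Q * Qd := by rw [mul_assoc, fQdd]
  have fQQd2 : ∀ i : ℕ, Q * Qd ^ (i + 2) = Qd ^ (i + 1) := by
    intro i
    calc Q * Qd ^ (i + 2) = Q * Qd * Qd * Qd ^ i := by
          rw [pow_succ' Qd, pow_succ' Qd]; noncomm_ring
      _ = Qd * Qd ^ i := by rw [fQdd]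
      _ = Qd ^ (i + 1) := (pow_succ' Qd i).symm
  have f_piQ : (1 - P * Pd) * Q = Q := by
    rw [sub_mul, one_mul, mul_assoc, fPdQ, mul_zero, sub_zero]
  have f_piQd : (1 - P * Pd) * Qd = Qd := by
    rw [sub_mul, one_mul, mul_assoc, fPdQd, mul_zero, sub_zero]
  have fPdpP : ∀ i : ℕ, Pd ^ (i + 2) * P = Pd ^ (i + 1) := by
    intro i
    calc Pd ^ (i + 2) * P = Pd ^ i * (Pd * Pd * P) := by
          rw [pow_succ, pow_succ]; noncomm_ring
      _ = Pd ^ i * Pd := by rw [fPddP]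
      _ = Pd ^ (i + 1) := (pow_succ Pd i).symm
  have fPdpPPd : ∀ i : ℕ, Pd ^ (i + 1) * (P * Pd) = Pd ^ (i + 1) := by
    intro i
    calc Pd ^ (i + 1) * (P * Pd) = Pd ^ i * (Pd * P * Pd) := by
          rw [pow_succ]; noncomm_ring
      _ = Pd ^ i * Pd := by rw [hP2]
      _ = Pd ^ (i + 1) := (pow_succ Pd i).symm
  have fQpiL : (1 - Q * Qd) * Q ^ (h' + 1) = 0 := by
    rw [← (cQpi.pow_left (h' + 1)).eq]
    simpa using fQpipow 0
  have fQdpi : Qd * (1 - Q * Qd) = 0 := by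
    rw [mul_sub, mul_one, ← mul_assoc, hQ2, sub_self]
  have fpiPPd : (1 - P * Pd) * (P * Pd) = 0 := by
    have e : P * Pd * (P * Pd) = P * Pd := by
      rw [mul_assoc P Pd (P * Pd), ← mul_assoc Pd P Pd, hP2]
    rw [sub_mul, one_mul, e, sub_self]
  -- generic sum facts
  have genS1 : ∀ a : R, a * Q = 0 → a * S1 = a * Pd := by
    intro a ha
    have haQQd : a * (Q * Qd) = 0 := mz ha Qd
    rw [hS1def, Finset.mul_sum, Finset.sum_range_succ']
    have t1 : ∀ i : ℕ, a * ((1 - Q * Qd) * Q ^ (i + 1) * Pd ^ (i + 1 + 1)) = 0 := by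
      intro i
      rw [mul_assoc (1 - Q * Qd), mpi haQQd, pow_succ' Q, mul_assoc, mz ha]
    have t0 : a * ((1 - Q * Qd) * Q ^ 0 * Pd ^ (0 + 1)) = a * Pd := by
      rw [pow_zero, mul_one, pow_one, mpi haQQd]
    simp only [t1, t0, Finset.sum_const_zero, zero_add]
  have genS2 : ∀ a : R, a * Qd = 0 → a * S2 = 0 := by
    intro a ha
    rw [hS2def, Finset.mul_sum]
    apply Finset.sum_eq_zero
    intro m _
    rw [mul_assoc (Qd ^ (m + 1)), pow_succ' Qd, mul_assoc, mz ha]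
  -- (1)-(4)
  have hPS1 : P * S1 = P * Pd := genS1 P hPQ
  have hPS2 : P * S2 = 0 := genS2 P hPQd
  have hQS1 : Q * S1 = ∑ n ∈ range (h' + 1), (1 - Q * Qd) * Q ^ (n + 1) * Pd ^ (n + 1) := by
    rw [hS1def, Finset.mul_sum]
    apply Finset.sum_congr rfl
    intro n _
    calc Q * ((1 - Q * Qd) * Q ^ n * Pd ^ (n + 1))
        = ((Q * (1 - Q * Qd)) * Q ^ n) * Pd ^ (n + 1) := by rw [← mul_assoc, ← mul_assoc]
      _ = (((1 - Q * Qd) * Q) * Q ^ n) * Pd ^ (n + 1) := by rw [cQpi.eq]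
      _ = (1 - Q * Qd) * Q ^ (n + 1) * Pd ^ (n + 1) := by
          rw [mul_assoc (1 - Q * Qd) Q, ← pow_succ']
  have hQS2 : Q * S2 = Q * Qd * (1 - P * Pd) +
      ∑ m ∈ range (g' + 1), Qd ^ (m + 1) * P ^ (m + 1) * (1 - P * Pd) := by
    rw [hS2def, Finset.mul_sum, Finset.sum_range_succ']
    have t1 : ∀ i : ℕ, Q * (Qd ^ (i + 1 + 1) * P ^ (i + 1) * (1 - P * Pd)) =
        Qd ^ (i + 1) * P ^ (i + 1) * (1 - P * Pd) := by
      intro i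
      rw [← mul_assoc, ← mul_assoc, fQQd2]
    have t0 : Q * (Qd ^ (0 + 1) * P ^ 0 * (1 - P * Pd)) = Q * Qd * (1 - P * Pd) := by
      rw [pow_one, pow_zero, mul_one, ← mul_assoc]
    rw [Finset.sum_congr rfl (fun i _ => t1 i), t0]
    rw [Finset.sum_range_succ _ g']
    have tlast : Qd ^ (g' + 1) * P ^ (g' + 1) * (1 - P * Pd) = 0 := by
      rw [mul_assoc, show P ^ (g' + 1) * (1 - P * Pd) = 0 from hP3, mul_zero]
    rw [tlast, add_zero, add_comm]
  -- (5)-(8)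
  have hS1P : S1 * P = (1 - Q * Qd) * (Pd * P) +
      ∑ n ∈ range (h' + 1), (1 - Q * Qd) * Q ^ (n + 1) * Pd ^ (n + 1) := by
    rw [hS1def, Finset.sum_mul, Finset.sum_range_succ']
    have t1 : ∀ i : ℕ, ((1 - Q * Qd) * Q ^ (i + 1) * Pd ^ (i + 1 + 1)) * P =
        (1 - Q * Qd) * Q ^ (i + 1) * Pd ^ (i + 1) := by
      intro i
      rw [mul_assoc, fPdpP]
    have t0 : ((1 - Q * Qd) * Q ^ 0 * Pd ^ (0 + 1)) * P = (1 - Q * Qd) * (Pd * P) := by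
      rw [pow_zero, mul_one, pow_one, mul_assoc]
    rw [Finset.sum_congr rfl (fun i _ => t1 i), t0]
    rw [Finset.sum_range_succ _ h']
    have tlast : (1 - Q * Qd) * Q ^ (h' + 1) * Pd ^ (h' + 1) = 0 := by
      rw [fQpiL, zero_mul]
    rw [tlast, add_zero, add_comm]
  have hS2P : S2 * P = ∑ m ∈ range (g' + 1), Qd ^ (m + 1) * P ^ (m + 1) * (1 - P * Pd) := by
    rw [hS2def, Finset.sum_mul]
    apply Finset.sum_congr rfl
    intro m _
    calc (Qd ^ (m + 1) * P ^ m * (1 - P * Pd)) * P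
        = Qd ^ (m + 1) * P ^ m * ((1 - P * Pd) * P) := by rw [mul_assoc]
      _ = Qd ^ (m + 1) * P ^ m * (P * (1 - P * Pd)) := by rw [← cPpi.eq]
      _ = Qd ^ (m + 1) * (P ^ m * P) * (1 - P * Pd) := by noncomm_ring
      _ = Qd ^ (m + 1) * P ^ (m + 1) * (1 - P * Pd) := by rw [← pow_succ]
  have hS1Q : S1 * Q = 0 := by
    rw [hS1def, Finset.sum_mul]
    apply Finset.sum_eq_zero
    intro n _
    rw [mul_assoc, fPdpQ, mul_zero]
  have hS2Q : S2 * Q = Qd * Q := by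
    rw [hS2def, Finset.sum_mul, Finset.sum_range_succ']
    have t1 : ∀ i : ℕ, (Qd ^ (i + 1 + 1) * P ^ (i + 1) * (1 - P * Pd)) * Q = 0 := by
      intro i
      rw [mul_assoc, mul_assoc, f_piQ, fPpQ, mul_zero]
    have t0 : (Qd ^ (0 + 1) * P ^ 0 * (1 - P * Pd)) * Q = Qd * Q := by
      rw [pow_one, pow_zero, mul_one, mul_assoc, f_piQ]
    simp only [t1, t0, Finset.sum_const_zero, zero_add]
  -- common value W
  set W : R := P * Pd + Q * Qd * (1 - P * Pd) +
      (∑ m ∈ range (g' + 1), Qd ^ (m + 1) * P ^ (m + 1) * (1 - P * Pd)) +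
      (∑ n ∈ range (h' + 1), (1 - Q * Qd) * Q ^ (n + 1) * Pd ^ (n + 1)) with hWdef
  have hW1 : (P + Q) * Z = W := by
    rw [hZ, mul_add, add_mul, add_mul, hPS1, hPS2, hQS1, hQS2, hWdef]
    abel
  have hW2 : Z * (P + Q) = W := by
    rw [hZ, add_mul, mul_add, mul_add, hS1P, hS2P, hS1Q, hS2Q, hWdef]
    have e : (1 - Q * Qd) * (Pd * P) + Qd * Q = P * Pd + Q * Qd * (1 - P * Pd) := by
      rw [← hP1, ← hQ1]; noncomm_ring
    rw [← e]; abel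
  -- extra toolkit
  have fPdQp : ∀ j : ℕ, Pd * Q ^ (j + 1) = 0 := fun j => by
    rw [pow_succ' Q, ← mul_assoc, fPdQ, zero_mul]
  have fPpQdp : ∀ i j : ℕ, P ^ (i + 1) * Qd ^ (j + 1) = 0 := fun i j => by
    rw [pow_succ' Qd, ← mul_assoc, fPpQd, zero_mul]
  have fPdpQdp : ∀ i j : ℕ, Pd ^ (i + 1) * Qd ^ (j + 1) = 0 := fun i j => by
    rw [pow_succ' Qd, ← mul_assoc, fPdpQd, zero_mul]
  have fPpQp : ∀ i j : ℕ, P ^ (i + 1) * Q ^ (j + 1) = 0 := fun i j => by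
    rw [pow_succ' Q, ← mul_assoc, fPpQ, zero_mul]
  have f_piQdp : ∀ j : ℕ, (1 - P * Pd) * Qd ^ (j + 1) = Qd ^ (j + 1) := fun j => by
    rw [pow_succ' Qd, ← mul_assoc, f_piQd]
  -- conclusion 2 pieces
  have pieceA : Z * (P * Pd) = S1 := by
    rw [hZ, add_mul]
    have a1 : S1 * (P * Pd) = S1 := by
      rw [hS1def, Finset.sum_mul]
      refine Finset.sum_congr rfl fun nn _ => ?_
      rw [mul_assoc, fPdpPPd]
    have a2 : S2 * (P * Pd) = 0 := by
      rw [hS2def, Finset.sum_mul]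
      refine Finset.sum_eq_zero fun mm _ => ?_
      rw [mul_assoc, fpiPPd, mul_zero]
    rw [a1, a2, add_zero]
  have pieceB : Z * (Q * Qd * (1 - P * Pd)) = Qd * (1 - P * Pd) := by
    rw [hZ, add_mul]
    have b1 : S1 * (Q * Qd * (1 - P * Pd)) = 0 := by
      rw [hS1def, Finset.sum_mul]
      refine Finset.sum_eq_zero fun nn _ => ?_
      rw [mul_assoc, mul_assoc Q Qd, mz (fPdpQ nn), mul_zero]
    have b2 : S2 * (Q * Qd * (1 - P * Pd)) = Qd * (1 - P * Pd) := by
      rw [hS2def, Finset.sum_mul, Finset.sum_range_succ']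
      have inner : (1 - P * Pd) * (Q * Qd * (1 - P * Pd)) = Q * Qd * (1 - P * Pd) := by
        rw [← mul_assoc, ← mul_assoc, f_piQ]
      have t1 : ∀ i : ℕ,
          (Qd ^ (i + 1 + 1) * P ^ (i + 1) * (1 - P * Pd)) * (Q * Qd * (1 - P * Pd)) = 0 := by
        intro i
        rw [mul_assoc, inner, mul_assoc, mul_assoc Q Qd, mz (fPpQ i), mul_zero]
      have t0 : (Qd ^ (0 + 1) * P ^ 0 * (1 - P * Pd)) * (Q * Qd * (1 - P * Pd)) =
          Qd * (1 - P * Pd) := by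
        rw [pow_one, pow_zero, mul_one, mul_assoc, inner, ← mul_assoc, ← mul_assoc, hQ2]
      simp only [t1, t0, Finset.sum_const_zero, zero_add]
    rw [b1, b2, zero_add]
  have pieceC : Z * (∑ m ∈ range (g' + 1), Qd ^ (m + 1) * P ^ (m + 1) * (1 - P * Pd)) =
      ∑ m ∈ range (g' + 1), Qd ^ (m + 1 + 1) * P ^ (m + 1) * (1 - P * Pd) := by
    rw [Finset.mul_sum]
    refine Finset.sum_congr rfl fun mm _ => ?_
    rw [hZ, add_mul]
    have c1 : S1 * (Qd ^ (mm + 1) * P ^ (mm + 1) * (1 - P * Pd)) = 0 := by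
      rw [hS1def, Finset.sum_mul]
      refine Finset.sum_eq_zero fun nn _ => ?_
      rw [mul_assoc ((1 - Q * Qd) * Q ^ nn), mul_assoc (Qd ^ (mm + 1)),
        mz (fPdpQdp nn mm), mul_zero]
    have c2 : S2 * (Qd ^ (mm + 1) * P ^ (mm + 1) * (1 - P * Pd)) =
        Qd ^ (mm + 1 + 1) * P ^ (mm + 1) * (1 - P * Pd) := by
      rw [hS2def, Finset.sum_mul, Finset.sum_range_succ']
      have t1 : ∀ i : ℕ, (Qd ^ (i + 1 + 1) * P ^ (i + 1) * (1 - P * Pd)) *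
          (Qd ^ (mm + 1) * P ^ (mm + 1) * (1 - P * Pd)) = 0 := by
        intro i
        rw [mul_assoc (Qd ^ (mm + 1)), mul_assoc (Qd ^ (i + 1 + 1) * P ^ (i + 1)),
          mr (f_piQdp mm), mul_assoc (Qd ^ (i + 1 + 1)), mz (fPpQdp i mm), mul_zero]
      have t0 : (Qd ^ (0 + 1) * P ^ 0 * (1 - P * Pd)) *
          (Qd ^ (mm + 1) * P ^ (mm + 1) * (1 - P * Pd)) =
          Qd ^ (mm + 1 + 1) * P ^ (mm + 1) * (1 - P * Pd) := by
        rw [pow_one, pow_zero, mul_one, mul_assoc (Qd ^ (mm + 1)), mul_assoc Qd,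
          mr (f_piQdp mm), ← mul_assoc, ← pow_succ' Qd (mm + 1), ← mul_assoc]
      simp only [t1, t0, Finset.sum_const_zero, zero_add]
    rw [c1, c2, zero_add]
  have pieceD : Z * (∑ n ∈ range (h' + 1), (1 - Q * Qd) * Q ^ (n + 1) * Pd ^ (n + 1)) = 0 := by
    rw [Finset.mul_sum]
    refine Finset.sum_eq_zero fun nn _ => ?_
    rw [hZ, add_mul]
    have inner : (1 - P * Pd) * ((1 - Q * Qd) * (Q ^ (nn + 1) * Pd ^ (nn + 1))) =
        (1 - Q * Qd) * (Q ^ (nn + 1) * Pd ^ (nn + 1)) := by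
      rw [sub_mul, one_mul, mul_assoc P Pd, mpi (mz fPdQ Qd), mz (fPdQp nn), mul_zero, sub_zero]
    have d1 : S1 * ((1 - Q * Qd) * Q ^ (nn + 1) * Pd ^ (nn + 1)) = 0 := by
      rw [hS1def, Finset.sum_mul]
      refine Finset.sum_eq_zero fun aa _ => ?_
      rw [mul_assoc (1 - Q * Qd) (Q ^ (nn + 1)), mul_assoc ((1 - Q * Qd) * Q ^ aa),
        mpi (mz (fPdpQ aa) Qd), mz (fPdpQp aa nn), mul_zero]
    have d2 : S2 * ((1 - Q * Qd) * Q ^ (nn + 1) * Pd ^ (nn + 1)) = 0 := by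
      rw [hS2def, Finset.sum_mul, Finset.sum_range_succ']
      have t1 : ∀ i : ℕ, (Qd ^ (i + 1 + 1) * P ^ (i + 1) * (1 - P * Pd)) *
          ((1 - Q * Qd) * Q ^ (nn + 1) * Pd ^ (nn + 1)) = 0 := by
        intro i
        rw [mul_assoc (1 - Q * Qd) (Q ^ (nn + 1)), mul_assoc (Qd ^ (i + 1 + 1) * P ^ (i + 1)),
          inner, mul_assoc (Qd ^ (i + 1 + 1)), mpi (mz (fPpQ i) Qd), mz (fPpQp i nn), mul_zero]
      have t0 : (Qd ^ (0 + 1) * P ^ 0 * (1 - P * Pd)) *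
          ((1 - Q * Qd) * Q ^ (nn + 1) * Pd ^ (nn + 1)) = 0 := by
        rw [pow_one, pow_zero, mul_one, mul_assoc (1 - Q * Qd) (Q ^ (nn + 1)), mul_assoc Qd,
          inner, ← mul_assoc, fQdpi, zero_mul]
      simp only [t1, t0, Finset.sum_const_zero, add_zero]
    rw [d1, d2, add_zero]
  have hZW : Z * W = Z := by
    rw [hWdef, mul_add, mul_add, mul_add, pieceA, pieceB, pieceC, pieceD, add_zero]
    have hS2' : Qd * (1 - P * Pd) +
        (∑ m ∈ range (g' + 1), Qd ^ (m + 1 + 1) * P ^ (m + 1) * (1 - P * Pd)) = S2 := by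
      rw [hS2def, Finset.sum_range_succ' (fun m => Qd ^ (m + 1) * P ^ m * (1 - P * Pd)) g',
        Finset.sum_range_succ (fun m => Qd ^ (m + 1 + 1) * P ^ (m + 1) * (1 - P * Pd)) g']
      have tlast : Qd ^ (g' + 1 + 1) * P ^ (g' + 1) * (1 - P * Pd) = 0 := by
        rw [mul_assoc, hP3, mul_zero]
      have t0 : Qd ^ (0 + 1) * P ^ 0 * (1 - P * Pd) = Qd * (1 - P * Pd) := by
        rw [pow_one, pow_zero, mul_one]
      rw [tlast, add_zero, t0, add_comm]
    rw [hZ, ← hS2']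
    abel
  -- conclusion 3
  have hpow : ∀ k : ℕ, (P + Q) ^ k = ∑ c ∈ range (k + 1), Q ^ (k - c) * P ^ c := by
    intro k
    induction k with
    | zero => simp
    | succ k ih =>
        rw [pow_succ, ih, Finset.sum_mul]
        have expand : ∀ c, (Q ^ (k - c) * P ^ c) * (P + Q) =
            Q ^ (k - c) * P ^ (c + 1) + Q ^ (k - c) * (P ^ c * Q) := by
          intro c
          rw [mul_add, mul_assoc, mul_assoc, ← pow_succ]
        rw [Finset.sum_congr rfl fun c _ => expand c, Finset.sum_add_distrib]
        have s2 : ∑ c ∈ range (k + 1), Q ^ (k - c) * (P ^ c * Q) = Q ^ (k + 1) := by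
          rw [Finset.sum_range_succ']
          have z1 : ∀ i : ℕ, Q ^ (k - (i + 1)) * (P ^ (i + 1) * Q) = 0 := fun i => by
            rw [fPpQ, mul_zero]
          simp only [z1, Finset.sum_const_zero, zero_add, Nat.sub_zero, pow_zero, one_mul,
            ← pow_succ]
        have s1 : ∑ c ∈ range (k + 1), Q ^ (k - c) * P ^ (c + 1) =
            (∑ c ∈ range (k + 2), Q ^ (k + 1 - c) * P ^ c) - Q ^ (k + 1) := by
          rw [Finset.sum_range_succ' (fun c => Q ^ (k + 1 - c) * P ^ c) (k + 1)]
          simp only [Nat.succ_sub_succ, Nat.sub_zero, pow_zero, mul_one]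
          rw [add_sub_cancel_right]
        rw [s1, s2]
        abel
  have hPbZ : ∀ b : ℕ, P ^ (b + 1) * Z = P ^ (b + 1) * Pd := by
    intro b
    rw [hZ, mul_add, genS1 _ (fPpQ b), genS2 _ (fPpQd b), add_zero]
  set K := g' + 1 + (h' + 1) with hKdef
  have hQKZ : Q ^ (K + 1) * Z =
      ∑ m ∈ range (g' + 1), Q ^ (K - m) * ((Q * Qd) * (P ^ m * (1 - P * Pd))) := by
    rw [hZ, mul_add]
    have q1 : Q ^ (K + 1) * S1 = 0 := by
      have hq : Q ^ (K + 1) * (1 - Q * Qd) = 0 := by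
        have h0 := fQpipow (g' + 1 + 1)
        rw [show h' + 1 + (g' + 1 + 1) = K + 1 by omega] at h0
        exact h0
      rw [hS1def, Finset.mul_sum]
      refine Finset.sum_eq_zero fun nn _ => ?_
      rw [mul_assoc (1 - Q * Qd) (Q ^ nn), ← mul_assoc, hq, zero_mul]
    have q2 : Q ^ (K + 1) * S2 =
        ∑ m ∈ range (g' + 1), Q ^ (K - m) * ((Q * Qd) * (P ^ m * (1 - P * Pd))) := by
      rw [hS2def, Finset.mul_sum]
      refine Finset.sum_congr rfl fun mm hmm => ?_
      have hmm2 : mm < g' + 1 := Finset.mem_range.mp hmm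
      have e1 : Q ^ (K + 1) * Qd ^ (mm + 1) = Q ^ (K - mm) * (Q * Qd) := by
        rw [show K + 1 = (K - mm) + (mm + 1) by omega, pow_add, mul_assoc, fQQdpow]
      calc Q ^ (K + 1) * (Qd ^ (mm + 1) * P ^ mm * (1 - P * Pd))
          = (Q ^ (K + 1) * Qd ^ (mm + 1)) * (P ^ mm * (1 - P * Pd)) := by
            rw [mul_assoc (Qd ^ (mm + 1)), ← mul_assoc]
        _ = Q ^ (K - mm) * ((Q * Qd) * (P ^ mm * (1 - P * Pd))) := by rw [e1, mul_assoc]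
    rw [q1, q2, zero_add]
  have concl3 : (P + Q) ^ (K + 1) * Z = (P + Q) ^ K := by
    rw [hpow (K + 1), Finset.sum_mul, Finset.sum_range_succ']
    have t1 : ∀ i : ℕ, (Q ^ (K + 1 - (i + 1)) * P ^ (i + 1)) * Z =
        Q ^ (K - i) * (P ^ (i + 1) * Pd) := by
      intro i
      rw [mul_assoc, hPbZ i, show K + 1 - (i + 1) = K - i by omega]
    have t0 : (Q ^ (K + 1 - 0) * P ^ 0) * Z = Q ^ (K + 1) * Z := by
      rw [Nat.sub_zero, pow_zero, mul_one]
    rw [Finset.sum_congr rfl fun i _ => t1 i, t0, hQKZ]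
    have e2 : ∀ i : ℕ, P ^ (i + 1) * Pd = P ^ i - P ^ i * (1 - P * Pd) := by
      intro i
      rw [pow_succ, mul_assoc, mul_sub, mul_one, sub_sub_cancel]
    have split : ∑ i ∈ range (K + 1), Q ^ (K - i) * (P ^ (i + 1) * Pd) =
        (∑ i ∈ range (K + 1), Q ^ (K - i) * P ^ i) -
          ∑ i ∈ range (K + 1), Q ^ (K - i) * (P ^ i * (1 - P * Pd)) := by
      rw [← Finset.sum_sub_distrib]
      refine Finset.sum_congr rfl fun i _ => ?_
      rw [e2 i, mul_sub]
    rw [split, ← hpow K]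
    have hAB : ∑ i ∈ range (K + 1), Q ^ (K - i) * (P ^ i * (1 - P * Pd)) =
        ∑ m ∈ range (g' + 1), Q ^ (K - m) * ((Q * Qd) * (P ^ m * (1 - P * Pd))) := by
      rw [← Finset.sum_range_add_sum_Ico _ (show g' + 1 ≤ K + 1 by omega)]
      have z : ∑ i ∈ Ico (g' + 1) (K + 1), Q ^ (K - i) * (P ^ i * (1 - P * Pd)) = 0 := by
        refine Finset.sum_eq_zero fun i hi => ?_
        have hi' : g' + 1 ≤ i := (Finset.mem_Ico.mp hi).1
        have hz : P ^ i * (1 - P * Pd) = 0 := by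
          have h0 := fPpipow (i - (g' + 1))
          rw [show g' + 1 + (i - (g' + 1)) = i by omega] at h0
          exact h0
        rw [hz, mul_zero]
      rw [z, add_zero]
      refine Finset.sum_congr rfl fun mq hmq => ?_
      have hmq2 : mq < g' + 1 := Finset.mem_range.mp hmq
      have hq : Q ^ (K - mq) = Q ^ (K - mq) * (Q * Qd) := by
        have h0 : Q ^ (K - mq) * (1 - Q * Qd) = 0 := by
          have h1 := fQpipow (K - mq - (h' + 1))
          rw [show h' + 1 + (K - mq - (h' + 1)) = K - mq by omega] at h1
          exact h1
        have h2 : Q ^ (K - mq) - Q ^ (K - mq) * (Q * Qd) = 0 := by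
          rwa [mul_sub, mul_one] at h0
        exact sub_eq_zero.mp h2
      conv_rhs => rw [← mul_assoc, ← hq]
    rw [hAB]
    abel
  exact ⟨hW1.trans hW2.symm, by rw [hW1]; exact hZW, concl3⟩

end DrazinRing
open Matrix Finset

/-- `X` is the Drazin inverse of `A`: `A X = X A`, `X A X = X`, and
`A^(k+1) X = A^k` for some (hence all sufficiently large) `k`. -/
def IsDrazinInverse {ι : Type*} [Fintype ι] [DecidableEq ι]
    (A X : Matrix ι ι ℂ) : Prop :=
  A * X = X * A ∧ X * A * X = X ∧ ∃ k : ℕ, A ^ (k + 1) * X = A ^ k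

set_option maxHeartbeats 2000000 in
theorem stmt_16 {m n : ℕ}
    (A Ad : Matrix (Fin m) (Fin m) ℂ) (B : Matrix (Fin m) (Fin n) ℂ)
    (C : Matrix (Fin n) (Fin m) ℂ) (D Dd : Matrix (Fin n) (Fin n) ℂ)
    (hAd : IsDrazinInverse A Ad) (hDd : IsDrazinInverse D Dd)
    (hBC : B * C = 0) (hBD : B * D = 0)
    (T Td : Matrix (Fin m ⊕ Fin n) (Fin m ⊕ Fin n) ℂ)
    (hT : T = Matrix.fromBlocks A B ((1 - D * Dd) * C) ((1 - D * Dd) * D))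
    (hTd : IsDrazinInverse T Td)
    (n' : ℕ) (hn' : 1 ≤ n')
    -- `n' > ind D`
    (hn'D : (1 - D * Dd) * D ^ (n' - 1) = 0)
    (g : ℕ) (hg : 1 ≤ g)
    -- `g ≥ ind T`
    (hgT : T ^ g * (1 - T * Td) = 0) :
    Td = Matrix.fromBlocks Ad (Ad ^ 2 * B) 0 0 +
        ∑ j ∈ Finset.Icc 1 (n' - 1),
          Matrix.fromBlocks 0 0
            ((1 - D * Dd) * D ^ (j - 1) * C * Ad ^ (j + 1))
            ((1 - D * Dd) * D ^ (j - 1) * C * Ad ^ (j + 2) * B) ∧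
    IsDrazinInverse (Matrix.fromBlocks A B C D)
      (Matrix.fromBlocks 0 0 (-(Dd * C * Ad)) (Dd - Dd * C * Ad ^ 2 * B) +
        Td +
        ∑ k ∈ Finset.range g,
          Matrix.fromBlocks 0 0 (Dd ^ (k + 2) * C) 0 * T ^ k * (1 - T * Td)) := by
  obtain ⟨hA1, hA2, kA, hA3⟩ := hAd
  obtain ⟨hD1, hD2, -⟩ := hDd
  obtain ⟨hT1, hT2, kT, hT3⟩ := hTd
  -- scalar facts about A
  have fAdd : A * (Ad * Ad) = Ad := by rw [← mul_assoc, hA1, hA2]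
  have hA3' : ∀ j : ℕ, A ^ (kA + 1 + j) * (1 - A * Ad) = 0 := by
    intro j
    have hup := drazin_pow_ext A Ad kA hA3 (j + 1)
    rw [show kA + (j + 1) + 1 = (kA + 1 + j) + 1 by omega,
      show kA + (j + 1) = kA + 1 + j by omega] at hup
    rw [mul_sub, mul_one, ← mul_assoc, ← pow_succ, hup, sub_self]
  -- scalar facts about D
  have dB : Dd * (D * Dd) = Dd := by rw [← mul_assoc, hD2]
  have dC : (D * Dd) * (D * Dd) = D * Dd := by rw [mul_assoc D Dd, dB]
  have dD : Dd * (1 - D * Dd) = 0 := by rw [mul_sub, mul_one, dB, sub_self]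
  have dE : D * Dd * (1 - D * Dd) = 0 := by rw [mul_assoc, dD, mul_zero]
  have dF : (1 - D * Dd) * (D * Dd) = 0 := by rw [sub_mul, one_mul, dC, sub_self]
  have dH : D * (Dd * Dd) = Dd := by rw [← mul_assoc, hD1, mul_assoc, dB]
  have dG : B * Dd = 0 := by
    calc B * Dd = B * (D * (Dd * Dd)) := by rw [dH]
      _ = (B * D) * (Dd * Dd) := by rw [Matrix.mul_assoc]
      _ = 0 := by rw [hBD, Matrix.zero_mul]
  have dIdem : (1 - D * Dd) * (1 - D * Dd) = 1 - D * Dd := by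
    rw [mul_sub, mul_one, dF, sub_zero]
  have dComm : D * (D * Dd) = (D * Dd) * D := by rw [mul_assoc, hD1]
  have dpiComm : Commute (1 - D * Dd) D := by
    unfold Commute SemiconjBy
    rw [sub_mul, mul_sub, one_mul, mul_one, dComm]
  have dpiD : ∀ j : ℕ, ((1 - D * Dd) * D ^ j) * (1 - D * Dd) = (1 - D * Dd) * D ^ j := by
    intro j
    rw [mul_assoc, ← (dpiComm.pow_right j).eq, ← mul_assoc, dIdem]
  -- right-assoc variants
  have hA2' : Ad * (A * Ad) = Ad := by rw [← mul_assoc, hA2]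
  -- block matrices for part 1
  set P1 : Matrix (Fin m ⊕ Fin n) (Fin m ⊕ Fin n) ℂ := Matrix.fromBlocks A B 0 0 with hP1def
  set Q1 : Matrix (Fin m ⊕ Fin n) (Fin m ⊕ Fin n) ℂ :=
    Matrix.fromBlocks 0 0 ((1 - D * Dd) * C) ((1 - D * Dd) * D) with hQ1def
  set Pd1 : Matrix (Fin m ⊕ Fin n) (Fin m ⊕ Fin n) ℂ :=
    Matrix.fromBlocks Ad (Ad ^ 2 * B) 0 0 with hPd1def
  have hBpiC : B * ((1 - D * Dd) * C) = 0 := by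
    rw [← Matrix.mul_assoc, Matrix.mul_sub, Matrix.mul_one, ← Matrix.mul_assoc, hBD,
      Matrix.zero_mul, sub_zero, hBC]
  have hBpiD : B * ((1 - D * Dd) * D) = 0 := by
    rw [← Matrix.mul_assoc, Matrix.mul_sub, Matrix.mul_one, ← Matrix.mul_assoc, hBD,
      Matrix.zero_mul, sub_zero, hBD]
  have hP1Q1 : P1 * Q1 = 0 := by
    rw [hP1def, hQ1def, Matrix.fromBlocks_multiply]
    simp [hBpiC, hBpiD]
  have sAdB : A * (Ad ^ 2 * B) = Ad * B := by
    rw [← Matrix.mul_assoc, pow_two, fAdd]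
  have hP1comm : P1 * Pd1 = Pd1 * P1 := by
    rw [hP1def, hPd1def, Matrix.fromBlocks_multiply, Matrix.fromBlocks_multiply]
    simp [sAdB, hA1]
  have e2TR : (Ad * A) * (Ad ^ 2 * B) = Ad ^ 2 * B := by
    rw [pow_two, ← Matrix.mul_assoc, ← mul_assoc, hA2]
  have hP1inv : Pd1 * P1 * Pd1 = Pd1 := by
    rw [hPd1def, hP1def, Matrix.fromBlocks_multiply, Matrix.fromBlocks_multiply]
    simp [hA2, e2TR]
  have P1pow : ∀ j : ℕ, P1 ^ (j + 1) = Matrix.fromBlocks (A ^ (j + 1)) (A ^ j * B) 0 0 := by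
    intro j
    induction j with
    | zero => rw [pow_one, hP1def]; simp
    | succ j ih =>
        rw [pow_succ, ih, hP1def, Matrix.fromBlocks_multiply]
        simp [pow_succ, Matrix.mul_assoc]
  have hpp : P1 * Pd1 = Matrix.fromBlocks (A * Ad) (Ad * B) 0 0 := by
    rw [hP1def, hPd1def, Matrix.fromBlocks_multiply]
    simp [sAdB]
  have hAexp : A ^ (kA + 2) * Ad = A ^ (kA + 1) := by
    have h0 := drazin_pow_ext A Ad kA hA3 1
    rwa [show kA + 1 + 1 = kA + 2 by omega] at h0
  have hAeat : A ^ (kA + 2) * (A * Ad) = A ^ (kA + 2) := by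
    have h0 := hA3' 1
    rw [show kA + 1 + 1 = kA + 2 by omega, mul_sub, mul_one, sub_eq_zero] at h0
    exact h0.symm
  have hP1idx : P1 ^ (kA + 2) * (1 - P1 * Pd1) = 0 := by
    rw [mul_sub, mul_one, sub_eq_zero, hpp, P1pow (kA + 1),
      show kA + 1 + 1 = kA + 2 by omega, Matrix.fromBlocks_multiply]
    rw [Matrix.fromBlocks_inj]
    refine ⟨?_, ?_, by simp, by simp⟩
    · simp [hAeat]
    · rw [← Matrix.mul_assoc, hAexp]
      simp
  have Q1pow : ∀ j : ℕ, Q1 ^ (j + 1) =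
      Matrix.fromBlocks 0 0 ((1 - D * Dd) * D ^ j * C) ((1 - D * Dd) * D ^ (j + 1)) := by
    intro j
    induction j with
    | zero => rw [pow_one, hQ1def]; simp
    | succ j ih =>
        rw [pow_succ, ih, hQ1def, Matrix.fromBlocks_multiply]
        have hBL : ((1 - D * Dd) * D ^ (j + 1)) * ((1 - D * Dd) * C) =
            (1 - D * Dd) * D ^ (j + 1) * C := by
          rw [← Matrix.mul_assoc, dpiD]
        have hBR : ((1 - D * Dd) * D ^ (j + 1)) * ((1 - D * Dd) * D) =
            (1 - D * Dd) * D ^ (j + 1 + 1) := by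
          rw [← mul_assoc, dpiD, mul_assoc, ← pow_succ]
        simp [hBL, hBR]
  obtain ⟨n'', rfl⟩ : ∃ n'', n' = n'' + 1 := ⟨n' - 1, by omega⟩
  have hn'D' : (1 - D * Dd) * D ^ n'' = 0 := by simpa using hn'D
  have hQ1nil : Q1 ^ (n'' + 1) = 0 := by
    rw [Q1pow n'']
    have h1 : (1 - D * Dd) * D ^ n'' * C = 0 := by rw [hn'D', Matrix.zero_mul]
    have h2 : (1 - D * Dd) * D ^ (n'' + 1) = 0 := by
      rw [pow_succ, ← mul_assoc, hn'D', zero_mul]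
    rw [h1, h2, Matrix.fromBlocks_zero]
  set Z1 : Matrix (Fin m ⊕ Fin n) (Fin m ⊕ Fin n) ℂ :=
    ∑ i ∈ range (n'' + 1), Q1 ^ i * Pd1 ^ (i + 1) with hZ1def
  have hZ1form : Z1 = (∑ i ∈ range (n'' + 1), (1 - Q1 * 0) * Q1 ^ i * Pd1 ^ (i + 1)) +
      ∑ j ∈ range (kA + 2), (0 : Matrix (Fin m ⊕ Fin n) (Fin m ⊕ Fin n) ℂ) ^ (j + 1) *
        P1 ^ j * (1 - P1 * Pd1) := by
    simp [hZ1def]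
  have happ1 := drazin_add P1 Pd1 Q1 (0 : Matrix (Fin m ⊕ Fin n) (Fin m ⊕ Fin n) ℂ) Z1
      (kA + 2) (n'' + 1) (by omega) (by omega) hP1Q1 (mul_zero P1)
      hP1comm hP1inv hP1idx (by rw [mul_zero, zero_mul])
      (by rw [zero_mul, zero_mul]) (by rw [mul_zero, sub_zero, mul_one, hQ1nil]) hZ1form
  have hTsum : T = P1 + Q1 := by
    rw [hT, hP1def, hQ1def, Matrix.fromBlocks_add]
    simp
  have hdz1comm : T * Z1 = Z1 * T := by rw [hTsum]; exact happ1.1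
  have hdz1inv : Z1 * T * Z1 = Z1 := by rw [hTsum, mul_assoc]; exact happ1.2.1
  have hdz1idx : T ^ (kA + 2 + (n'' + 1) + 1) * Z1 = T ^ (kA + 2 + (n'' + 1)) := by
    rw [hTsum]; exact happ1.2.2
  have hTdeq : Td = Z1 :=
    drazin_unique T Td Z1 hT1 hT2 ⟨kT, hT3⟩ hdz1comm hdz1inv ⟨_, hdz1idx⟩
  have Pd1pow : ∀ k : ℕ, Pd1 ^ (k + 1) =
      Matrix.fromBlocks (Ad ^ (k + 1)) (Ad ^ (k + 2) * B) 0 0 := by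
    intro k
    induction k with
    | zero => rw [pow_one, hPd1def]; norm_num
    | succ k ih =>
        rw [pow_succ, ih, hPd1def, Matrix.fromBlocks_multiply]
        simp [pow_succ, Matrix.mul_assoc]
  have hZ1eq : Z1 = Pd1 +
      ∑ j ∈ Finset.Icc 1 (n'' + 1 - 1),
        Matrix.fromBlocks 0 0
          ((1 - D * Dd) * D ^ (j - 1) * C * Ad ^ (j + 1))
          ((1 - D * Dd) * D ^ (j - 1) * C * Ad ^ (j + 2) * B) := by
    rw [hZ1def, Finset.sum_range_succ']
    have t0 : Q1 ^ 0 * Pd1 ^ (0 + 1) = Pd1 := by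
      rw [pow_zero, one_mul, pow_one]
    have t1 : ∀ i : ℕ, Q1 ^ (i + 1) * Pd1 ^ (i + 1 + 1) =
        Matrix.fromBlocks 0 0
          ((1 - D * Dd) * D ^ i * C * Ad ^ (i + 2))
          ((1 - D * Dd) * D ^ i * C * (Ad ^ (i + 3) * B)) := by
      intro i
      rw [Q1pow i, show i + 1 + 1 = i + 2 by omega, Pd1pow (i + 1),
        show i + 1 + 1 = i + 2 by omega, show i + 1 + 2 = i + 3 by omega,
        Matrix.fromBlocks_multiply]
      simp [Matrix.mul_assoc]
    rw [Finset.sum_congr rfl fun i _ => t1 i, t0, add_comm]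
    have hsum : (∑ j ∈ Finset.Icc 1 (n'' + 1 - 1),
        Matrix.fromBlocks 0 0
          ((1 - D * Dd) * D ^ (j - 1) * C * Ad ^ (j + 1))
          ((1 - D * Dd) * D ^ (j - 1) * C * Ad ^ (j + 2) * B) :
        Matrix (Fin m ⊕ Fin n) (Fin m ⊕ Fin n) ℂ)
        = ∑ i ∈ range n'',
          Matrix.fromBlocks 0 0
            ((1 - D * Dd) * D ^ i * C * Ad ^ (i + 2))
            ((1 - D * Dd) * D ^ i * C * (Ad ^ (i + 3) * B)) := by
      rw [show n'' + 1 - 1 = n'' by omega, ← Finset.Ico_add_one_right_eq_Icc, Finset.sum_Ico_eq_sum_range,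
        show n'' + 1 - 1 = n'' by omega]
      refine Finset.sum_congr rfl fun i _ => ?_
      rw [show 1 + i - 1 = i by omega, show 1 + i + 1 = i + 2 by omega,
        show 1 + i + 2 = i + 3 by omega, Matrix.mul_assoc ((1 - D * Dd) * D ^ i * C)]
    rw [hsum]
  refine ⟨hTdeq.trans hZ1eq, ?_⟩
  -- PART 2
  set Q2 : Matrix (Fin m ⊕ Fin n) (Fin m ⊕ Fin n) ℂ :=
    Matrix.fromBlocks 0 0 (D * Dd * C) (D * Dd * D) with hQ2def
  set Qd2 : Matrix (Fin m ⊕ Fin n) (Fin m ⊕ Fin n) ℂ :=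
    Matrix.fromBlocks 0 0 (Dd * Dd * C) Dd with hQd2def
  have dK : (D * Dd * D) * Dd = D * Dd := by rw [mul_assoc (D * Dd) D Dd, dC]
  have dL : (D * Dd * D) * (Dd * Dd) = Dd := by
    calc (D * Dd * D) * (Dd * Dd) = ((D * Dd * D) * Dd) * Dd := by rw [← mul_assoc]
      _ = (D * Dd) * Dd := by rw [dK]
      _ = Dd := by rw [mul_assoc, dH]
  have dBL : (D * Dd * D) * (Dd * Dd * C) = Dd * C := by rw [← Matrix.mul_assoc, dL]
  have hQ2Qd2 : Q2 * Qd2 = Matrix.fromBlocks 0 0 (Dd * C) (D * Dd) := by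
    rw [hQ2def, hQd2def, Matrix.fromBlocks_multiply]
    simp [dBL, dK]
  have hQd2Q2 : Qd2 * Q2 = Matrix.fromBlocks 0 0 (Dd * C) (D * Dd) := by
    rw [hQd2def, hQ2def, Matrix.fromBlocks_multiply]
    have e1 : Dd * (D * Dd * C) = Dd * C := by rw [← Matrix.mul_assoc, dB]
    have e2 : Dd * (D * Dd * D) = D * Dd := by rw [← mul_assoc, dB, hD1]
    simp [e1, e2]
  have hQ2comm : Q2 * Qd2 = Qd2 * Q2 := by rw [hQ2Qd2, hQd2Q2]
  have hQ2inv : Qd2 * Q2 * Qd2 = Qd2 := by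
    rw [hQd2Q2, hQd2def, Matrix.fromBlocks_multiply]
    have e3a : (D * Dd) * (Dd * Dd) = Dd * Dd := by
      rw [← mul_assoc, mul_assoc D Dd Dd, dH]
    have e3 : (D * Dd) * (Dd * Dd * C) = Dd * Dd * C := by
      rw [← Matrix.mul_assoc, e3a]
    have e4 : (D * Dd) * Dd = Dd := by rw [mul_assoc, dH]
    simp [e3, e4]
  have hQ2idx : Q2 ^ 1 * (1 - Q2 * Qd2) = 0 := by
    rw [pow_one, mul_sub, mul_one, sub_eq_zero, hQ2Qd2, hQ2def, Matrix.fromBlocks_multiply]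
    have e5 : (D * Dd * D) * (Dd * C) = D * Dd * C := by rw [← Matrix.mul_assoc, dK]
    have e6 : (D * Dd * D) * (D * Dd) = D * Dd * D := by
      rw [mul_assoc (D * Dd) D (D * Dd), dComm, ← mul_assoc, dC]
    simp [e5, e6]
  have hpiDDd : (1 - D * Dd) * D * (D * Dd) = 0 := by
    rw [mul_assoc, dComm, ← mul_assoc, dF, zero_mul]
  have hpiDDd2 : ((1 - D * Dd) * D) * Dd = 0 := by rw [mul_assoc, dF]
  have hTQ2 : T * Q2 = 0 := by
    rw [hT, hQ2def, Matrix.fromBlocks_multiply]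
    have e7 : B * (D * Dd * C) = 0 := by
      rw [← Matrix.mul_assoc, ← Matrix.mul_assoc, hBD, Matrix.zero_mul, Matrix.zero_mul]
    have e8 : B * (D * Dd * D) = 0 := by
      rw [← Matrix.mul_assoc, ← Matrix.mul_assoc, hBD, Matrix.zero_mul, Matrix.zero_mul]
    have e9 : ((1 - D * Dd) * D) * (D * Dd * C) = 0 := by
      rw [← Matrix.mul_assoc, hpiDDd, Matrix.zero_mul]
    have e10 : ((1 - D * Dd) * D) * (D * Dd * D) = 0 := by
      rw [← mul_assoc, hpiDDd, zero_mul]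
    simp [e7, e8, e9, e10]
  have hTQd2 : T * Qd2 = 0 := by
    rw [hT, hQd2def, Matrix.fromBlocks_multiply]
    have e12 : B * (Dd * Dd * C) = 0 := by
      rw [← Matrix.mul_assoc, ← Matrix.mul_assoc, dG, Matrix.zero_mul, Matrix.zero_mul]
    have e13 : ((1 - D * Dd) * D) * (Dd * Dd * C) = 0 := by
      rw [← Matrix.mul_assoc, ← Matrix.mul_assoc, hpiDDd2, Matrix.zero_mul, Matrix.zero_mul]
    simp [e12, e13, dG, hpiDDd2]
  have hMsum : Matrix.fromBlocks A B C D = T + Q2 := by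
    rw [hT, hQ2def, Matrix.fromBlocks_add]
    have e14 : (1 - D * Dd) * C + D * Dd * C = C := by
      rw [Matrix.sub_mul, Matrix.one_mul, sub_add_cancel]
    have e15 : (1 - D * Dd) * D + D * Dd * D = D := by
      rw [sub_mul, one_mul, sub_add_cancel]
    rw [e14, e15]
    simp
  have Qd2pow : ∀ k : ℕ, Qd2 ^ (k + 1) = Matrix.fromBlocks 0 0 (Dd ^ (k + 2) * C) (Dd ^ (k + 1)) := by
    intro k
    induction k with
    | zero => rw [pow_one, hQd2def]; norm_num [pow_two]
    | succ k ih =>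
        rw [pow_succ, ih, hQd2def, Matrix.fromBlocks_multiply]
        have e16 : Dd ^ (k + 1) * (Dd * Dd * C) = Dd ^ (k + 1 + 2) * C := by
          rw [← Matrix.mul_assoc, ← mul_assoc, ← pow_succ, ← pow_succ,
            show k + 1 + 1 + 1 = k + 1 + 2 by omega]
        have e17 : Dd ^ (k + 1) * Dd = Dd ^ (k + 1 + 1) := (pow_succ Dd (k + 1)).symm
        simp [e16, e17]
  have Qd2split : ∀ k : ℕ, Qd2 ^ (k + 1) =
      Matrix.fromBlocks 0 0 (Dd ^ (k + 2) * C) 0 + Matrix.fromBlocks 0 0 0 (Dd ^ (k + 1)) := by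
    intro k; rw [Qd2pow k, Matrix.fromBlocks_add]; simp
  have hDdpiC : Dd * ((1 - D * Dd) * C) = 0 := by
    rw [← Matrix.mul_assoc, dD, Matrix.zero_mul]
  have hDdpiD : Dd * ((1 - D * Dd) * D) = 0 := by rw [← mul_assoc, dD, zero_mul]
  have key0 : (Matrix.fromBlocks 0 0 0 Dd : Matrix (Fin m ⊕ Fin n) (Fin m ⊕ Fin n) ℂ) * T = 0 := by
    rw [hT, Matrix.fromBlocks_multiply]
    simp [hDdpiC, hDdpiD]
  have keysplit : ∀ k : ℕ,
      (Matrix.fromBlocks 0 0 0 (Dd ^ (k + 2)) : Matrix (Fin m ⊕ Fin n) (Fin m ⊕ Fin n) ℂ)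
      = Matrix.fromBlocks 0 0 0 (Dd ^ (k + 1)) * Matrix.fromBlocks 0 0 0 Dd := by
    intro k; rw [Matrix.fromBlocks_multiply]; simp [pow_succ]
  have keym : ∀ k : ℕ,
      (Matrix.fromBlocks 0 0 0 (Dd ^ (k + 2)) : Matrix (Fin m ⊕ Fin n) (Fin m ⊕ Fin n) ℂ) *
        T ^ (k + 1) * (1 - T * Td) = 0 := by
    intro k
    rw [keysplit k, pow_succ' T, mul_assoc (Matrix.fromBlocks 0 0 0 (Dd ^ (k + 1))),
      ← mul_assoc (Matrix.fromBlocks 0 0 0 Dd), key0, zero_mul, mul_zero, zero_mul]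
  have key00 : (Matrix.fromBlocks 0 0 0 Dd : Matrix (Fin m ⊕ Fin n) (Fin m ⊕ Fin n) ℂ) *
      T ^ 0 * (1 - T * Td) = Matrix.fromBlocks 0 0 0 Dd := by
    rw [pow_zero, mul_one, mul_sub, mul_one, ← mul_assoc, key0, zero_mul, sub_zero]
  obtain ⟨g'', rfl⟩ : ∃ g'', g = g'' + 1 := ⟨g - 1, by omega⟩
  have hsum2 : ∑ k ∈ range (g'' + 1), Qd2 ^ (k + 1) * T ^ k * (1 - T * Td)
      = (∑ k ∈ range (g'' + 1),
          Matrix.fromBlocks 0 0 (Dd ^ (k + 2) * C) 0 * T ^ k * (1 - T * Td)) +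
        Matrix.fromBlocks 0 0 0 Dd := by
    have e18 : ∀ k, Qd2 ^ (k + 1) * T ^ k * (1 - T * Td)
        = Matrix.fromBlocks 0 0 (Dd ^ (k + 2) * C) 0 * T ^ k * (1 - T * Td) +
          Matrix.fromBlocks 0 0 0 (Dd ^ (k + 1)) * T ^ k * (1 - T * Td) := by
      intro k; rw [Qd2split k, add_mul, add_mul]
    rw [Finset.sum_congr rfl fun k _ => e18 k, Finset.sum_add_distrib]
    congr 1
    rw [Finset.sum_range_succ']
    have z : ∀ i, Matrix.fromBlocks 0 0 0 (Dd ^ (i + 1 + 1)) * T ^ (i + 1) * (1 - T * Td) = 0 := by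
      intro i
      have h0 := keym i
      rwa [show i + 2 = i + 1 + 1 by omega] at h0
    simp only [z, Finset.sum_const_zero, zero_add]
    simpa using key00
  have hQQdTd : (Q2 * Qd2) * Td = Matrix.fromBlocks 0 0 (Dd * C * Ad) (Dd * C * (Ad ^ 2 * B)) := by
    rw [hQ2Qd2, hTdeq, hZ1eq, mul_add, Finset.mul_sum]
    have z : ∀ j ∈ Finset.Icc 1 (n'' + 1 - 1),
        (Matrix.fromBlocks 0 0 (Dd * C) (D * Dd) : Matrix (Fin m ⊕ Fin n) (Fin m ⊕ Fin n) ℂ) *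
          Matrix.fromBlocks 0 0
            ((1 - D * Dd) * D ^ (j - 1) * C * Ad ^ (j + 1))
            ((1 - D * Dd) * D ^ (j - 1) * C * Ad ^ (j + 2) * B) = 0 := by
      intro j _
      rw [Matrix.fromBlocks_multiply]
      have w1 : (D * Dd) * ((1 - D * Dd) * D ^ (j - 1) * C * Ad ^ (j + 1)) = 0 := by
        rw [← Matrix.mul_assoc, ← Matrix.mul_assoc, ← Matrix.mul_assoc, dE,
          Matrix.zero_mul, Matrix.zero_mul, Matrix.zero_mul]
      have w2 : (D * Dd) * ((1 - D * Dd) * D ^ (j - 1) * C * Ad ^ (j + 2) * B) = 0 := by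
        rw [← Matrix.mul_assoc, ← Matrix.mul_assoc, ← Matrix.mul_assoc, ← Matrix.mul_assoc, dE,
          Matrix.zero_mul, Matrix.zero_mul, Matrix.zero_mul, Matrix.zero_mul]
      simp [w1, w2]
    rw [Finset.sum_eq_zero z, add_zero, hPd1def, Matrix.fromBlocks_multiply]
    simp
  have hblocks : (Matrix.fromBlocks 0 0 (-(Dd * C * Ad)) (Dd - Dd * C * Ad ^ 2 * B) :
      Matrix (Fin m ⊕ Fin n) (Fin m ⊕ Fin n) ℂ)
      = Matrix.fromBlocks 0 0 0 Dd -
        Matrix.fromBlocks 0 0 (Dd * C * Ad) (Dd * C * (Ad ^ 2 * B)) := by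
    conv_rhs => rw [sub_eq_add_neg, Matrix.fromBlocks_neg, Matrix.fromBlocks_add]
    rw [Matrix.fromBlocks_inj]
    refine ⟨by simp, by simp, by simp, ?_⟩
    rw [sub_eq_add_neg, Matrix.mul_assoc (Dd * C) (Ad ^ 2) B]
  have hYeq : Matrix.fromBlocks 0 0 (-(Dd * C * Ad)) (Dd - Dd * C * Ad ^ 2 * B) + Td +
      (∑ k ∈ range (g'' + 1), Matrix.fromBlocks 0 0 (Dd ^ (k + 2) * C) 0 * T ^ k * (1 - T * Td))
      = (∑ i ∈ range 1, (1 - Q2 * Qd2) * Q2 ^ i * Td ^ (i + 1)) +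
        ∑ k ∈ range (g'' + 1), Qd2 ^ (k + 1) * T ^ k * (1 - T * Td) := by
    rw [Finset.sum_range_one, pow_zero, mul_one, pow_one, hsum2, sub_mul, one_mul, hQQdTd,
      hblocks]
    abel
  have happ2 := drazin_add T Td Q2 Qd2 _ (g'' + 1) 1 (by omega) (le_refl 1)
      hTQ2 hTQd2 hT1 hT2 hgT hQ2comm hQ2inv hQ2idx hYeq
  rw [hMsum]
  exact ⟨happ2.1, by rw [mul_assoc]; exact happ2.2.1, ⟨g'' + 1 + 1, happ2.2.2⟩⟩
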